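/- Let Δ be the Laplacian on the flat 1-torus 𝕋 (acting on L²(𝕋)). There exists a positive function f ∈ L¹(𝕋) (for instance f(t) = 1/(|t| |log|t||^{3/2}) on 𝕋 ≅ [−1/2,1/2] with endpoints identified) such that the densely defined operator (1+Δ)^{-1/4} M_f (1+Δ)^{-1/4} does not extend to a Hilbert–Schmidt operator on L²(𝕋); equivalently, M_{√f} (1+Δ)^{-1/2} M_{√f} is not Hilbert–Schmidt. -/

import Mathlib

/-!
Take `f = 1 + ∑ᵢ 2⁻ⁱ F_{Nᵢ}`, a lacunary sum of Fejér kernels `F_N = |∑_{m<N} e_m|² / N` with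
`Nᵢ = 2 E_{i+1}`, where `E₀ = 1` and `E_{i+1} = Eᵢ 2^(4^i)`. Each `F_N` is nonnegative with
`F̂_N(n) = #{(m, m') ∈ [0, N)² | m - m' = n} / N ∈ [0, 1]`, so `f` is positive and integrable,
its Fourier coefficients are nonnegative, and `F̂_{Nᵢ}(n) ≥ 1/2` gives `f̂(n) ≥ 2^-(i+1)` for
`0 ≤ n ≤ E_{i+1}`. An operator `S` with the prescribed matrix elements would have the column
`⟨e_n, S e₀⟩ = (1 + 4π²n²)^(-1/4) f̂(n)`, so `|⟨e_n, S e₀⟩|² ≥ 4^-(i+1) / (7n)` on the block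
`Eᵢ < n ≤ E_{i+1}`. As `∑_{Eᵢ < n ≤ E_{i+1}} 1/n ≥ 4^i / 2`, every block contributes at least
`1/56`, contradicting Bessel's inequality for `S e₀ ∈ L²`.
-/

open MeasureTheory Filter Topology ComplexConjugate
open scoped ENNReal NNReal InnerProductSpace RealInnerProductSpace

noncomputable section

namespace NCG

variable {H : Type*} [NormedAddCommGroup H] [InnerProductSpace ℂ H] [CompleteSpace H]

/-- `sv T n` : the `n`-th approximation number of `T`; for compact `T` this is the
`(n+1)`-st singular value `μ_{n+1}(T)` of the paper. -/
def sv (T : H →L[ℂ] H) (n : ℕ) : ℝ :=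
  sInf { c | ∃ S : H →L[ℂ] H, Module.rank ℂ (LinearMap.range (S : H →ₗ[ℂ] H)) ≤ n ∧ c = ‖T - S‖ }

/-- `gam T k = (log (1+(k+1)))⁻¹ * ∑_{n=1}^{k+1} μ_n(T)` : the sequence `γ(T)` of the paper,
with the `0`-indexing `gam T k = γ(T)_{k+1}`. -/
def gam (T : H →L[ℂ] H) (k : ℕ) : ℝ :=
  (Real.log ((k : ℝ) + 2))⁻¹ * ∑ n ∈ Finset.range (k + 1), sv T n

/-- membership in the ideal `𝓛^{1,∞}`. -/
def MemL1Inf (T : H →L[ℂ] H) : Prop :=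
  IsCompactOperator T ∧ BddAbove (Set.range (gam T))

/-- the norm `‖T‖_{1,∞}`. -/
def norm1Inf (T : H →L[ℂ] H) : ℝ := ⨆ k, gam T k

/-- membership in `𝓛^{1,∞}_0`, i.e. `limsup_k γ(T)_k = 0`. -/
def MemL1Inf0 (T : H →L[ℂ] H) : Prop :=
  IsCompactOperator T ∧ Tendsto (gam T) atTop (𝓝 0)

/-- the seminorm `‖T‖₀ = inf { ‖T - V‖_{1,∞} : V ∈ 𝓛^{1,∞}_0 }`. -/
def norm0 (T : H →L[ℂ] H) : ℝ :=
  sInf { c | ∃ V : H →L[ℂ] H, MemL1Inf0 V ∧ c = norm1Inf (T - V) }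

/-- trace class operators `𝓛¹`. -/
def MemTraceClass (T : H →L[ℂ] H) : Prop :=
  IsCompactOperator T ∧ Summable (sv T)

/-- the Schatten class `𝓛^p`. -/
def MemSchatten (p : ℝ) (T : H →L[ℂ] H) : Prop :=
  IsCompactOperator T ∧ Summable (fun n => sv T n ^ p)

/-- `zeta T s = Tr(|T|^s) = ∑_n μ_n(T)^s`. -/
def zeta (T : H →L[ℂ] H) (s : ℝ) : ℝ := ∑' n, sv T n ^ s

/-- `‖T‖_{Z₁} = limsup_{s→1⁺} (s-1) (Tr |T|^s)^{1/s}`. -/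
def normZ1 (T : H →L[ℂ] H) : ℝ :=
  limsup (fun s : ℝ => (s - 1) * zeta T s ^ (1 / s)) (𝓝[>] (1 : ℝ))

/-- a bounded sequence (i.e. an element of `ℓ^∞`). -/
def Bdd (a : ℕ → ℝ) : Prop := ∃ C, ∀ k, |a k| ≤ C

/-- A generalized limit: a state on `ℓ^∞` squeezed between `liminf` and `limsup` on
(bounded) positive sequences.  We realise functionals on `ℓ^∞` as linear functionals on the
space of all sequences; only their values on bounded sequences are ever used. -/
def IsGenLim (ω : (ℕ → ℝ) →ₗ[ℝ] ℝ) : Prop :=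
  (ω fun _ => 1) = 1 ∧
  ∀ a : ℕ → ℝ, (∀ k, 0 ≤ a k) → Bdd a →
    liminf a atTop ≤ ω a ∧ ω a ≤ limsup a atTop

/-- A Banach limit: a shift-invariant generalized limit (the class `BL`). -/
def IsBanachLim (ω : (ℕ → ℝ) →ₗ[ℝ] ℝ) : Prop :=
  IsGenLim ω ∧ ∀ a : ℕ → ℝ, Bdd a → ∀ j : ℕ, (ω fun k => a (k + j)) = ω a

/-- A dilation-invariant generalized limit (the class `DL`);
in the `0`-indexed picture `(D_j a)_k = a_{⌈(k+1)/j⌉ - 1} = a_{k / j}` (ℕ-division). -/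
def IsDilLim (ω : (ℕ → ℝ) →ₗ[ℝ] ℝ) : Prop :=
  IsGenLim ω ∧ ∀ a : ℕ → ℝ, Bdd a → ∀ j : ℕ, 1 ≤ j → (ω fun k => a (k / j)) = ω a

/-- The class `DL₂` (relative to the Hilbert space `H`): generalized limits that are invariant
under the dilation `D₂` on the sequences `γ(T)`, `0 ≤ T ∈ 𝓛^{1,∞}`. -/
def IsDL2 (H : Type*) [NormedAddCommGroup H] [InnerProductSpace ℂ H] [CompleteSpace H]
    (ω : (ℕ → ℝ) →ₗ[ℝ] ℝ) : Prop :=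
  IsGenLim ω ∧
  ∀ T : H →L[ℂ] H, T.IsPositive → MemL1Inf T →
    (ω fun k => gam T (k / 2)) = ω (gam T)

/-- `Φ` is (an extension to `B(H)` of) the Dixmier trace `Tr_ω`: a linear functional agreeing
with `T ↦ ω(γ(T))` on positive elements of `𝓛^{1,∞}`.  Any such `Φ` agrees with `Tr_ω` on all
of `𝓛^{1,∞}`. -/
def IsDixTr (ω : (ℕ → ℝ) →ₗ[ℝ] ℝ) (Φ : (H →L[ℂ] H) →ₗ[ℂ] ℂ) : Prop :=
  ∀ T : H →L[ℂ] H, T.IsPositive → MemL1Inf T → Φ T = (ω (gam T) : ℂ)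

/-- `T` is measurable in the sense of Connes (`T` positive case). -/
def ConnesMeasurable (T : H →L[ℂ] H) : Prop :=
  ∃ c : ℝ, ∀ ω : (ℕ → ℝ) →ₗ[ℝ] ℝ, IsDL2 H ω → ω (gam T) = c

/-- The transform `𝓛(ω) = ω ∘ E ∘ L⁻¹ ∘ p` of the paper, in the `0`-indexed picture:
`(E(L⁻¹(p(a))))_{k+1} = ∫_k^{k+1} a_{⌊e^t⌋} dt`. -/
def LTrans (a : ℕ → ℝ) : ℕ → ℝ := fun k => ∫ t in (k : ℝ)..((k : ℝ) + 1), a (⌊Real.exp t⌋₊ - 1)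


instance : Fact ((0 : ℝ) < 1) := ⟨one_pos⟩

/-- The character `t ↦ e^{2πikt}` on the flat `1`-torus `𝕋 = ℝ/ℤ`, as an element of
`L²(𝕋, haarAddCircle)` (`haarAddCircle` is the normalized Haar probability measure). -/
def circleChar (k : ℤ) : Lp ℂ 2 (AddCircle.haarAddCircle (T := 1)) :=
  ContinuousMap.toLp 2 (AddCircle.haarAddCircle (T := 1)) ℂ (fourier k)

open Finset

section Fejer

variable {T : ℝ}

lemma integrable_haarAddCircle_of_continuous [Fact (0 < T)] {E : Type*} [NormedAddCommGroup E]
    {g : AddCircle T → E} (hg : Continuous g) : Integrable g AddCircle.haarAddCircle :=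
  hg.integrable_of_hasCompactSupport (.of_compactSpace g)

def fejerKernel (N : ℕ) (x : AddCircle T) : ℝ :=
  ‖∑ m ∈ range N, fourier (m : ℤ) x‖ ^ 2 / N

def diffCount (N : ℕ) (j : ℤ) : ℕ := #{p ∈ range N ×ˢ range N | (p.1 : ℤ) - p.2 = j}

lemma diffCount_le (N : ℕ) (j : ℤ) : diffCount N j ≤ N := by
  refine (card_le_card_of_injOn Prod.snd (fun p hp => ?_) fun p hp q hq hpq => ?_).trans
    (card_range N).le
  · simp only [coe_filter, mem_product, Set.mem_ofPred_eq] at hp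
    exact hp.1.2
  · simp only [coe_filter, mem_product, Set.mem_ofPred_eq] at hp hq
    exact Prod.ext (by omega) hpq

lemma sub_le_diffCount (N n : ℕ) : N - n ≤ diffCount N n := by
  refine (card_range _).symm.le.trans (card_le_card_of_injOn (fun m => (m + n, m)) ?_ ?_)
  · intro m hm
    simp only [coe_range, Set.mem_Iio] at hm
    simp only [coe_filter, mem_product, mem_range, Set.mem_ofPred_eq]
    refine ⟨⟨by omega, by omega⟩, by push_cast; ring⟩
  · intro a _ b _ hab
    simpa using congrArg Prod.snd hab

lemma fejerKernel_nonneg (N : ℕ) (x : AddCircle T) : 0 ≤ fejerKernel N x := by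
  unfold fejerKernel; positivity

lemma continuous_fejerKernel (N : ℕ) : Continuous (fejerKernel (T := T) N) := by
  have h : Continuous fun x : AddCircle T => ∑ m ∈ range N, fourier (m : ℤ) x :=
    continuous_finsetSum _ fun m _ => map_continuous _
  exact (h.norm.pow 2).div_const _

lemma ofReal_fejerKernel (N : ℕ) (x : AddCircle T) :
    (fejerKernel N x : ℂ)
      = (N : ℂ)⁻¹ * ∑ m ∈ range N, ∑ m' ∈ range N, fourier ((m : ℤ) - m') x := by
  have hconj : conj (∑ m ∈ range N, fourier (m : ℤ) x)
      = ∑ m ∈ range N, fourier (-(m : ℤ)) x := by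
    simp only [map_sum, fourier_neg]
  rw [fejerKernel, Complex.ofReal_div, Complex.ofReal_pow, ← Complex.mul_conj', hconj,
    sum_mul_sum]
  simp only [sub_eq_add_neg, fourier_add]
  push_cast
  ring

lemma fourierCoeff_fejerKernel [Fact (0 < T)] (N : ℕ) (j : ℤ) :
    fourierCoeff (T := T) (fun x => (fejerKernel N x : ℂ)) j
      = ((diffCount N j / N : ℝ) : ℂ) := by
  simp_rw [ofReal_fejerKernel]
  have hsum :
      (fun x : AddCircle T => ∑ m ∈ range N, ∑ m' ∈ range N, fourier ((m : ℤ) - m') x)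
        = ∑ m ∈ range N, ∑ m' ∈ range N, ⇑(fourier (T := T) ((m : ℤ) - m')) := by
    ext x; simp only [Finset.sum_apply]
  have hint (k : ℤ) : Integrable (fourier (T := T) k) AddCircle.haarAddCircle :=
    integrable_haarAddCircle_of_continuous (map_continuous _)
  have hint' (m : ℕ) : Integrable (∑ m' ∈ range N, ⇑(fourier (T := T) ((m : ℤ) - m')))
      AddCircle.haarAddCircle :=
    integrable_finsetSum' _ fun m' _ => hint _
  rw [fourierCoeff.const_mul, hsum, fourierCoeff.sum _ _ fun m _ => hint' m]
  simp_rw [fourierCoeff.sum _ _ fun m' _ => hint _]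
  simp only [Finset.sum_apply, fourierCoeff_fourier, Pi.single_apply]
  rw [← sum_product', sum_boole, diffCount]
  simp only [eq_comm (a := j)]
  push_cast
  ring

lemma integral_fejerKernel [Fact (0 < T)] (N : ℕ) :
    ∫ x, fejerKernel N x ∂AddCircle.haarAddCircle (T := T) = (diffCount N 0 / N : ℝ) := by
  have h := fourierCoeff_fejerKernel (T := T) N 0
  simp only [fourierCoeff, neg_zero, fourier_zero, one_smul] at h
  exact_mod_cast h

lemma diffCount_div_le_one (N : ℕ) (j : ℤ) : (diffCount N j / N : ℝ) ≤ 1 :=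
  div_le_one_of_le₀ (by exact_mod_cast diffCount_le N j) (Nat.cast_nonneg N)

lemma half_le_diffCount_div {N n : ℕ} (hN : 0 < N) (hn : 2 * n ≤ N) :
    1 / 2 ≤ (diffCount N n / N : ℝ) := by
  have h : N ≤ 2 * diffCount N n := by have := sub_le_diffCount N n; omega
  rw [le_div_iff₀ (by exact_mod_cast hN)]
  have : (N : ℝ) ≤ 2 * diffCount N n := by exact_mod_cast h
  linarith

end Fejer

section Series

variable {α ι : Type*} [MeasurableSpace α] [Countable ι] {μ : Measure α}

lemma integrable_tsum_of_summable_integral_norm {E : Type*} [NormedAddCommGroup E]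
    [CompleteSpace E] [MeasurableSpace E] [BorelSpace E] [SecondCountableTopology E]
    {g : ι → α → E} (hg : ∀ i, Integrable (g i) μ)
    (hsum : Summable fun i => ∫ x, ‖g i x‖ ∂μ) :
    Integrable (fun x => ∑' i, g i x) μ := by
  refine ⟨(AEMeasurable.tsum fun i => (hg i).aemeasurable).aestronglyMeasurable, ?_⟩
  calc ∫⁻ x, ‖∑' i, g i x‖ₑ ∂μ ≤ ∫⁻ x, ∑' i, ‖g i x‖ₑ ∂μ :=
        lintegral_mono fun x => enorm_tsum_le_tsum_enorm
    _ = ∑' i, ENNReal.ofReal (∫ x, ‖g i x‖ ∂μ) := by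
        simp only [lintegral_tsum fun i => (hg i).aemeasurable.enorm,
          ofReal_integral_norm_eq_lintegral_enorm (hg _)]
    _ < ⊤ := by
        rw [← ENNReal.ofReal_tsum_of_nonneg
          (fun i => integral_nonneg fun x => norm_nonneg _) hsum]
        exact ENNReal.ofReal_lt_top

lemma fourierCoeff_tsum {T : ℝ} [Fact (0 < T)] {F : ι → AddCircle T → ℂ}
    (hF : ∀ i, Integrable (F i) AddCircle.haarAddCircle)
    (hsum : Summable fun i => ∫ x, ‖F i x‖ ∂AddCircle.haarAddCircle) (n : ℤ) :
    fourierCoeff (fun x => ∑' i, F i x) n = ∑' i, fourierCoeff (F i) n := by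
  have hnorm (i : ι) (x : AddCircle T) : ‖fourier (-n) x • F i x‖ = ‖F i x‖ := by
    rw [norm_smul, fourier_apply, Circle.norm_coe, one_mul]
  simp only [fourierCoeff, smul_eq_mul, ← tsum_mul_left]
  exact (integral_tsum_of_summable_integral_norm (fun i => (hF i).fourier_smul (-n))
    (by simpa only [hnorm] using hsum)).symm

end Series

section Lacunary

variable {T : ℝ}

def lacunaryScale : ℕ → ℕ
  | 0 => 1
  | i + 1 => lacunaryScale i * 2 ^ 4 ^ i

lemma one_le_lacunaryScale : ∀ i, 1 ≤ lacunaryScale i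
  | 0 => le_rfl
  | i + 1 => Nat.mul_pos (one_le_lacunaryScale i) (Nat.two_pow_pos _)

lemma monotone_lacunaryScale : Monotone lacunaryScale :=
  monotone_nat_of_le_succ fun _ => Nat.le_mul_of_pos_right _ (Nat.two_pow_pos _)

def lacunaryTerm (i : ℕ) (x : AddCircle T) : ℝ :=
  (1 / 2 : ℝ) ^ i * fejerKernel (2 * lacunaryScale (i + 1)) x

def lacunaryFejer (x : AddCircle T) : ℝ := 1 + ∑' i, lacunaryTerm i x

def lacunaryCoeff (i : ℕ) (n : ℤ) : ℝ :=
  (1 / 2 : ℝ) ^ i * (diffCount (2 * lacunaryScale (i + 1)) n / (2 * lacunaryScale (i + 1) : ℕ))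

lemma lacunaryTerm_nonneg (i : ℕ) (x : AddCircle T) : 0 ≤ lacunaryTerm i x :=
  mul_nonneg (by positivity) (fejerKernel_nonneg _ x)

lemma lacunaryFejer_pos (x : AddCircle T) : 0 < lacunaryFejer x :=
  add_pos_of_pos_of_nonneg one_pos (tsum_nonneg fun i => lacunaryTerm_nonneg i x)

lemma lacunaryCoeff_nonneg (i : ℕ) (n : ℤ) : 0 ≤ lacunaryCoeff i n := by
  unfold lacunaryCoeff; positivity

lemma summable_lacunaryCoeff (n : ℤ) : Summable (lacunaryCoeff · n) :=
  summable_geometric_two.of_nonneg_of_le (lacunaryCoeff_nonneg · n) fun _ =>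
    mul_le_of_le_one_right (by positivity) (diffCount_div_le_one _ _)

lemma half_pow_succ_le_lacunaryCoeff {i n : ℕ} (hn : n ≤ lacunaryScale (i + 1)) :
    (1 / 2 : ℝ) ^ (i + 1) ≤ lacunaryCoeff i n := by
  rw [lacunaryCoeff, pow_succ]
  exact mul_le_mul_of_nonneg_left (half_le_diffCount_div
    (by have := one_le_lacunaryScale (i + 1); omega) (by omega)) (by positivity)

variable [Fact (0 < T)]

lemma integrable_lacunaryTerm (i : ℕ) :
    Integrable (lacunaryTerm (T := T) i) AddCircle.haarAddCircle :=
  integrable_haarAddCircle_of_continuous (continuous_const.mul (continuous_fejerKernel _))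

lemma fourierCoeff_lacunaryTerm (i : ℕ) (n : ℤ) :
    fourierCoeff (T := T) (fun x => (lacunaryTerm i x : ℂ)) n = lacunaryCoeff i n := by
  simp only [lacunaryTerm, lacunaryCoeff, Complex.ofReal_mul, fourierCoeff.const_mul,
    fourierCoeff_fejerKernel]

lemma summable_integral_norm_lacunaryTerm :
    Summable fun i => ∫ x, ‖lacunaryTerm (T := T) i x‖ ∂AddCircle.haarAddCircle := by
  simp only [Real.norm_eq_abs, abs_of_nonneg, lacunaryTerm_nonneg]
  simpa only [lacunaryTerm, lacunaryCoeff, integral_const_mul, integral_fejerKernel]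
    using summable_lacunaryCoeff 0

lemma integrable_lacunaryFejer :
    Integrable (lacunaryFejer (T := T)) AddCircle.haarAddCircle :=
  (integrable_const 1).add <| integrable_tsum_of_summable_integral_norm
    integrable_lacunaryTerm summable_integral_norm_lacunaryTerm

lemma fourierCoeff_lacunaryFejer (n : ℤ) :
    fourierCoeff (T := T) (fun x => (lacunaryFejer x : ℂ)) n
      = (((Pi.single 0 1 : ℤ → ℝ) n + ∑' i, lacunaryCoeff i n : ℝ) : ℂ) := by
  have hfun : (fun x => (lacunaryFejer x : ℂ))
      = ⇑(fourier (T := T) 0) + fun x => ∑' i, (lacunaryTerm (T := T) i x : ℂ) := by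
    ext x
    simp [lacunaryFejer, Complex.ofReal_tsum]
  have hint (i : ℕ) : Integrable (fun x => (lacunaryTerm (T := T) i x : ℂ))
      AddCircle.haarAddCircle :=
    (integrable_lacunaryTerm i).ofReal
  have hsum : Summable fun i =>
      ∫ x, ‖(lacunaryTerm (T := T) i x : ℂ)‖ ∂AddCircle.haarAddCircle := by
    simpa only [Complex.norm_real] using summable_integral_norm_lacunaryTerm
  rw [hfun, fourierCoeff.add (integrable_haarAddCircle_of_continuous (map_continuous _))
    (integrable_tsum_of_summable_integral_norm hint hsum), Pi.add_apply,
    fourierCoeff_fourier, fourierCoeff_tsum hint hsum]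
  simp only [fourierCoeff_lacunaryTerm, Complex.ofReal_add, Complex.ofReal_tsum,
    Pi.single_apply, apply_ite Complex.ofReal, Complex.ofReal_one, Complex.ofReal_zero]

lemma le_norm_fourierCoeff_lacunaryFejer {i n : ℕ} (hn : n ≤ lacunaryScale (i + 1)) :
    (1 / 2 : ℝ) ^ (i + 1)
      ≤ ‖fourierCoeff (T := T) (fun x => (lacunaryFejer x : ℂ)) n‖ := by
  have hconst : 0 ≤ (Pi.single 0 1 : ℤ → ℝ) n := by
    rw [Pi.single_apply]; split_ifs <;> norm_num
  calc (1 / 2 : ℝ) ^ (i + 1) ≤ lacunaryCoeff i n := half_pow_succ_le_lacunaryCoeff hn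
    _ ≤ ∑' k, lacunaryCoeff k n :=
        (summable_lacunaryCoeff n).le_tsum i fun k _ => lacunaryCoeff_nonneg k n
    _ ≤ (Pi.single 0 1 : ℤ → ℝ) n + ∑' k, lacunaryCoeff k n :=
        le_add_of_nonneg_left hconst
    _ ≤ _ := by rw [fourierCoeff_lacunaryFejer, Complex.norm_real]; exact le_abs_self _

end Lacunary

section Divergence

lemma half_le_sum_Ioc_inv {n : ℕ} (hn : 1 ≤ n) :
    1 / 2 ≤ ∑ j ∈ Ioc n (2 * n), (1 / j : ℝ) := by
  calc (1 / 2 : ℝ) = ∑ _j ∈ Ioc n (2 * n), (1 / (2 * n) : ℝ) := by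
        rw [sum_const, Nat.card_Ioc, nsmul_eq_mul]
        field_simp
        push_cast [show 2 * n - n = n by omega]
        ring
    _ ≤ ∑ j ∈ Ioc n (2 * n), (1 / j : ℝ) := sum_le_sum fun j hj => by
        obtain ⟨hj1, hj2⟩ := mem_Ioc.mp hj
        exact one_div_le_one_div_of_le (by exact_mod_cast (Nat.zero_le n).trans_lt hj1)
          (by exact_mod_cast hj2)

lemma div_two_le_sum_Ioc_inv {n : ℕ} (hn : 1 ≤ n) (m : ℕ) :
    m / 2 ≤ ∑ j ∈ Ioc n (n * 2 ^ m), (1 / j : ℝ) := by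
  induction m with
  | zero => simp
  | succ m ih =>
    have hle : n ≤ n * 2 ^ m := Nat.le_mul_of_pos_right _ (Nat.two_pow_pos m)
    rw [← sum_Ioc_consecutive _ hle
        (Nat.mul_le_mul_left _ (Nat.pow_le_pow_right two_pos m.le_succ)),
      show n * 2 ^ (m + 1) = 2 * (n * 2 ^ m) by ring]
    have := half_le_sum_Ioc_inv (hn.trans hle)
    push_cast
    linarith

lemma one_div_fiftySix_le_sum_Ioc_lacunaryScale {g : ℕ → ℝ}
    (hg : ∀ i n, lacunaryScale i < n → n ≤ lacunaryScale (i + 1) →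
      (1 / 4 : ℝ) ^ (i + 1) / (7 * n) ≤ g n) (i : ℕ) :
    1 / 56 ≤ ∑ n ∈ Ioc (lacunaryScale i) (lacunaryScale (i + 1)), g n := by
  have hharm := div_two_le_sum_Ioc_inv (one_le_lacunaryScale i) (4 ^ i)
  have hpow : (1 / 4 : ℝ) ^ i * 4 ^ i = 1 := by rw [← mul_pow]; norm_num
  calc (1 / 56 : ℝ) = (1 / 4 : ℝ) ^ (i + 1) / 7 * ((4 ^ i : ℕ) / 2) := by
        push_cast
        rw [pow_succ]
        linear_combination (-1 / 56 : ℝ) * hpow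
    _ ≤ (1 / 4 : ℝ) ^ (i + 1) / 7
          * ∑ n ∈ Ioc (lacunaryScale i) (lacunaryScale (i + 1)), (1 / n : ℝ) :=
        mul_le_mul_of_nonneg_left hharm (by positivity)
    _ ≤ ∑ n ∈ Ioc (lacunaryScale i) (lacunaryScale (i + 1)), g n := by
        rw [mul_sum]
        refine sum_le_sum fun n hn => ?_
        obtain ⟨hn1, hn2⟩ := mem_Ioc.mp hn
        calc (1 / 4 : ℝ) ^ (i + 1) / 7 * (1 / n) = (1 / 4 : ℝ) ^ (i + 1) / (7 * n) := by ring
          _ ≤ g n := hg i n hn1 hn2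

lemma not_summable_of_lacunaryScale_lower_bound {g : ℕ → ℝ} (hg0 : ∀ n, 0 ≤ g n)
    (hg : ∀ i n, lacunaryScale i < n → n ≤ lacunaryScale (i + 1) →
      (1 / 4 : ℝ) ^ (i + 1) / (7 * n) ≤ g n) :
    ¬ Summable g := by
  intro hsum
  have hgrow (I : ℕ) : I / 56 ≤ ∑ n ∈ Ioc (lacunaryScale 0) (lacunaryScale I), g n := by
    induction I with
    | zero => simp
    | succ I ih =>
      rw [← sum_Ioc_consecutive _ (monotone_lacunaryScale I.zero_le)
        (monotone_lacunaryScale I.le_succ)]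
      have := one_div_fiftySix_le_sum_Ioc_lacunaryScale hg I
      push_cast
      linarith
  obtain ⟨I, hI⟩ := exists_nat_gt (56 * ∑' n, g n)
  have := (hgrow I).trans (hsum.sum_le_tsum _ fun n _ => hg0 n)
  linarith

end Divergence

lemma one_div_seven_mul_le_sq_rpow {x : ℝ} (hx : 1 ≤ x) :
    1 / (7 * x) ≤ ((1 + 4 * Real.pi ^ 2 * x ^ 2) ^ (-(1 : ℝ) / 4)) ^ 2 := by
  have hpos : 0 < 1 + 4 * Real.pi ^ 2 * x ^ 2 := by positivity
  have hpi : Real.pi ^ 2 < 10 := by nlinarith [Real.pi_lt_d2, Real.pi_pos]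
  have hle : 1 + 4 * Real.pi ^ 2 * x ^ 2 ≤ (7 * x) ^ 2 := by
    nlinarith [mul_le_mul_of_nonneg_right hpi.le (sq_nonneg x)]
  calc 1 / (7 * x) = ((7 * x) ^ 2) ^ (-(1 : ℝ) / 2) := by
        rw [← Real.rpow_natCast, ← Real.rpow_mul (by positivity)]
        norm_num [Real.rpow_neg_one]
    _ ≤ (1 + 4 * Real.pi ^ 2 * x ^ 2) ^ (-(1 : ℝ) / 2) :=
        Real.rpow_le_rpow_of_nonpos hpos hle (by norm_num)
    _ = _ := by
        rw [← Real.rpow_natCast (_ ^ _) 2, ← Real.rpow_mul hpos.le]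
        norm_num

/-- Lemma 6.3 of the paper: there is a positive `f ∈ L¹(𝕋)` — e.g.
`f(t) = 1/(|t| |log|t||^{3/2})` on `𝕋 ≅ [-1/2,1/2]` — such that the densely defined operator
`(1+Δ)^{-1/4} M_f (1+Δ)^{-1/4}` has no Hilbert–Schmidt extension: no Hilbert–Schmidt operator
`S` has matrix elements
`⟨e_j, S e_k⟩ = (1+4π²j²)^{-1/4} (1+4π²k²)^{-1/4} ∫ f(t) e^{2πi(k-j)t} dt`
in the Fourier basis `e_k(t) = e^{2πikt}`. -/
theorem statement3 :
    ∃ f : AddCircle (1 : ℝ) → ℝ, (∀ x, 0 < f x) ∧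
      Integrable f (AddCircle.haarAddCircle (T := 1)) ∧
      ¬ ∃ S : Lp ℂ 2 (AddCircle.haarAddCircle (T := 1)) →L[ℂ]
            Lp ℂ 2 (AddCircle.haarAddCircle (T := 1)),
          (Summable fun k : ℤ => ‖S (circleChar k)‖ ^ 2) ∧
          ∀ j k : ℤ, (inner ℂ (circleChar j) (S (circleChar k)) : ℂ) =
            (((1 + 4 * Real.pi ^ 2 * (j : ℝ) ^ 2) ^ (-(1 : ℝ) / 4) *
              (1 + 4 * Real.pi ^ 2 * (k : ℝ) ^ 2) ^ (-(1 : ℝ) / 4) : ℝ) : ℂ) *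
              ∫ x, ((f x : ℝ) : ℂ) * fourier (k - j) x ∂(AddCircle.haarAddCircle (T := 1)) := by
  refine ⟨lacunaryFejer, lacunaryFejer_pos, integrable_lacunaryFejer, ?_⟩
  rintro ⟨S, -, hS⟩
  have hcol (n : ℕ) : ‖(inner ℂ (circleChar n) (S (circleChar 0)) : ℂ)‖
      = (1 + 4 * Real.pi ^ 2 * (n : ℝ) ^ 2) ^ (-(1 : ℝ) / 4)
        * ‖fourierCoeff (T := 1) (fun x => (lacunaryFejer x : ℂ)) n‖ := by
    rw [hS]
    simp only [fourierCoeff, smul_eq_mul, zero_sub, mul_comm (fourier _ _), Int.cast_zero,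
      Int.cast_natCast, norm_mul, Complex.norm_real, Real.norm_eq_abs]
    rw [abs_of_nonneg (by positivity)]
    norm_num
  refine not_summable_of_lacunaryScale_lower_bound
    (g := fun n : ℕ => ‖(inner ℂ (circleChar n) (S (circleChar 0)) : ℂ)‖ ^ 2)
    (fun n => by positivity) (fun i n hlo hhi => ?_)
    ((orthonormal_fourier.inner_products_summable _).comp_injective Nat.cast_injective)
  have hn : (1 : ℝ) ≤ n := by exact_mod_cast (one_le_lacunaryScale i).trans hlo.le
  calc (1 / 4 : ℝ) ^ (i + 1) / (7 * n) = 1 / (7 * n) * ((1 / 2 : ℝ) ^ (i + 1)) ^ 2 := by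
        rw [← pow_mul, mul_comm (i + 1), pow_mul]
        ring
    _ ≤ _ := by
        rw [hcol, mul_pow]
        exact mul_le_mul (one_div_seven_mul_le_sq_rpow hn)
          (pow_le_pow_left₀ (by positivity) (le_norm_fourierCoeff_lacunaryFejer hhi) 2)
          (by positivity) (by positivity)

end NCG
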